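/- Let α ≠ 0, η ∈ ℝ and q > 0 be real parameters, let c = α/(q+1) + η(q+1)/α, and define u : ℝ × ℝ → ℝ by u(x,t) = (1/2 + (1/2)·tanh( (−α q)/(2(q+1)) · (x − c t) ))^(1/q) (real power, well defined since the base lies in (0,1)). Then u solves the generalized Burgers–Fisher equation with unit diffusion: for all x, t ∈ ℝ, ∂u/∂t (x,t) + α · u(x,t)^q · ∂u/∂x (x,t) − ∂²u/∂x² (x,t) = η · u(x,t) · (1 − u(x,t)^q). -/

import Mathlib

/-!
With `k = -αq/(2(q+1))`, the base `G r = 1/2 + tanh (k r)/2` of the wave solves the logistic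
equation `G' = 2k G (1 - G)`, so the profile `F = G^(1/q)` has `F' = (2k/q) F (1 - G)` and
`F^q = G`. For a traveling wave `u(x,t) = F(x - ct)` the equation becomes the ODE
`-c F' + α F^q F' - F'' = η F (1 - F^q)`; after dividing by `(2k/q) F (1 - G)` both sides are
affine in `G`, and the choice of `k` makes the coefficients of `G` cancel, while the choice of
`c` matches the constant terms.
-/

open Real

theorem Real.hasDerivAt_tanh (x : ℝ) : HasDerivAt tanh (1 - tanh x ^ 2) x := by
  have hcosh : cosh x ≠ 0 := (cosh_pos x).ne'
  have h := (hasDerivAt_sinh x).div (hasDerivAt_cosh x) hcosh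
  rw [show sinh / cosh = tanh from funext fun y => (tanh_eq_sinh_div_cosh y).symm] at h
  refine h.congr_deriv ?_
  rw [tanh_eq_sinh_div_cosh]
  field_simp

theorem deriv_comp_const_sub_mul (F : ℝ → ℝ) (x c t : ℝ) :
    deriv (fun s => F (x - c * s)) t = -c * deriv F (x - c * t) := by
  rw [deriv_comp_mul_left c (fun y => F (x - y)) t, deriv_comp_const_sub, smul_eq_mul, mul_neg,
    neg_mul]

theorem HasDerivAt.rpow_const_of_logistic {G : ℝ → ℝ} {a p s : ℝ}
    (hG : HasDerivAt G (a * G s * (1 - G s)) s) (hpos : 0 < G s) :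
    HasDerivAt (fun r => G r ^ p) (a * p * G s ^ p * (1 - G s)) s := by
  convert hG.rpow_const (p := p) (Or.inl hpos.ne') using 1
  rw [rpow_sub hpos, rpow_one]
  field_simp

noncomputable def tanhKink (k r : ℝ) : ℝ := 1/2 + (1/2) * tanh (k * r)

namespace tanhKink

variable (k : ℝ)

theorem pos (r : ℝ) : 0 < tanhKink k r := by
  have := neg_one_lt_tanh (k * r)
  unfold tanhKink
  linarith

theorem hasDerivAt (s : ℝ) :
    HasDerivAt (tanhKink k) (2 * k * tanhKink k s * (1 - tanhKink k s)) s := by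
  have h : HasDerivAt (tanhKink k) ((1/2) * ((1 - tanh (k * s) ^ 2) * (k * 1))) s :=
    (((hasDerivAt_tanh (k * s)).comp s ((hasDerivAt_id s).const_mul k)).const_mul _).const_add _
  convert h using 1
  simp only [tanhKink]
  ring

theorem hasDerivAt_rpow (p s : ℝ) :
    HasDerivAt (fun r => tanhKink k r ^ p)
      (2 * k * p * tanhKink k s ^ p * (1 - tanhKink k s)) s :=
  (hasDerivAt k s).rpow_const_of_logistic (pos k s)

theorem deriv_rpow (p : ℝ) :
    deriv (fun r => tanhKink k r ^ p)
      = fun s => 2 * k * p * tanhKink k s ^ p * (1 - tanhKink k s) :=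
  funext fun s => (hasDerivAt_rpow k p s).deriv

theorem deriv_deriv_rpow (p s : ℝ) :
    deriv (deriv fun r => tanhKink k r ^ p) s
      = 2 * k * p * (2 * k * p * tanhKink k s ^ p * (1 - tanhKink k s) * (1 - tanhKink k s)
          - tanhKink k s ^ p * (2 * k * tanhKink k s * (1 - tanhKink k s))) := by
  rw [deriv_rpow]
  exact (((hasDerivAt_rpow k p s).const_mul (2 * k * p)).mul
    ((hasDerivAt k s).const_sub 1)).deriv.trans (by ring)

theorem rpow_one_div_rpow {q : ℝ} (hq : q ≠ 0) (r : ℝ) :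
    (tanhKink k r ^ (1/q)) ^ q = tanhKink k r := by
  rw [one_div, rpow_inv_rpow (pos k r).le hq]

end tanhKink

noncomputable def gbfProfile (α q r : ℝ) : ℝ := tanhKink ((-α * q) / (2 * (q + 1))) r ^ (1/q)

theorem gbfProfile_ode {α η q c : ℝ} (hα : α ≠ 0) (hq : 0 < q)
    (hc : c = α / (q + 1) + η * (q + 1) / α) (r : ℝ) :
    -c * deriv (gbfProfile α q) r + α * gbfProfile α q r ^ q * deriv (gbfProfile α q) r
      - deriv (deriv (gbfProfile α q)) r = η * gbfProfile α q r * (1 - gbfProfile α q r ^ q) := by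
  set k := (-α * q) / (2 * (q + 1)) with hk
  have hF : gbfProfile α q = fun r => tanhKink k r ^ (1/q) := rfl
  simp only [hF]
  rw [tanhKink.deriv_deriv_rpow, tanhKink.deriv_rpow, tanhKink.rpow_one_div_rpow k hq.ne']
  beta_reduce
  generalize tanhKink k r ^ (1/q) = F
  generalize tanhKink k r = G
  rw [hk, hc]
  have hq1 : q + 1 ≠ 0 := by positivity
  field_simp
  ring

/-- The traveling-wave profile
`u(x,t) = (1/2 + (1/2)·tanh((−αq)/(2(q+1))·(x − c t)))^(1/q)` (real power)
solves the generalized Burgers–Fisher equation with unit diffusion: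
`u_t + α u^q u_x − u_xx = η u (1 − u^q)`. -/
theorem gbf_traveling_wave_solves
    (α η q : ℝ) (hα : α ≠ 0) (hq : 0 < q)
    (c : ℝ) (hc : c = α / (q + 1) + η * (q + 1) / α)
    (u : ℝ → ℝ → ℝ)
    (hu : ∀ x t : ℝ,
      u x t = (1/2 + (1/2) * Real.tanh ((-α * q) / (2 * (q + 1)) * (x - c * t))) ^ (1/q)) :
    ∀ x t : ℝ,
      deriv (fun s => u x s) t
        + α * (u x t) ^ q * deriv (fun y => u y t) x
        - deriv (fun y => deriv (fun z => u z t) y) x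
      = η * u x t * (1 - (u x t) ^ q) := by
  intro x t
  have hu' : u = fun y s => gbfProfile α q (y - c * s) := funext fun y => funext fun s => hu y s
  subst hu'
  simp only [deriv_comp_const_sub_mul, deriv_comp_sub_const]
  linear_combination gbfProfile_ode hα hq hc (x - c * t)
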